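/- Energy decrease along the flow: in the setting of the continuous forward–backward flow ẋ(t) + x(t) = prox_{γf}(x(t) − γ∇g(x(t))) with f proper convex lsc, g convex with (1/β)-Lipschitz gradient and γ > 0, for almost every t ≥ 0 one has (d/dt)[(f+g)(ẋ(t)+x(t)) + (1/(2γ))‖ẋ(t)‖²] + [1/γ − (1/β)(3 + γ/β)]‖ẋ(t)‖² ≤ 0. In particular, if (γ/β)(3 + γ/β) ≤ 1, the function t ↦ (f+g)(ẋ(t)+x(t)) + (1/(2γ))‖ẋ(t)‖² is nonincreasing. -/

import Mathlib

open Filter MeasureTheory Set Topology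
open scoped RealInnerProductSpace NNReal

/-!
Along the flow the energy has derivative `⟪∇g(ẋ+x) - ∇g(x), ẍ+ẋ⟫ - (1/γ)‖ẋ‖²`, and the Lipschitz
bound on `∇g` together with `‖ẍ‖ ≤ (2+γ/β)‖ẋ‖` bounds the inner product by `(1/β)(3+γ/β)‖ẋ‖²`.
An a.e. nonpositive derivative only forces monotonicity for absolutely continuous functions, so
the energy is shown to be Lipschitz on compact intervals: monotonicity of `∂f` at the points
`ẋ(t)+x(t)` gives `‖ẋ(t) - ẋ(s)‖ ≤ (1+2γ/β)‖x(t) - x(s)‖`, hence `ẋ` is locally Lipschitz, and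
`f` and `g` are Lipschitz along `ẋ+x` because their subgradients there stay bounded.
-/

theorem antitoneOn_of_ae_deriv_nonpos {E : ℝ → ℝ} {s : Set ℝ} (hs : s.OrdConnected)
    (hE : ∀ a ∈ s, ∀ b ∈ s, a ≤ b → AbsolutelyContinuousOnInterval E a b)
    (hd : ∀ᵐ t ∂volume.restrict s, deriv E t ≤ 0) :
    AntitoneOn E s := by
  intro a ha b hb hab
  have hd' : 0 ≤ᵐ[volume.restrict (Icc a b)] fun t => -deriv E t := by
    filter_upwards [ae_restrict_of_ae_restrict_of_subset (hs.out ha hb) hd] with t ht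
    exact neg_nonneg.mpr ht
  have := intervalIntegral.integral_nonneg_of_ae_restrict hab hd'
  rw [intervalIntegral.integral_neg, (hE a ha b hb hab).integral_deriv_eq_sub] at this
  linarith

section InnerProduct

variable {H : Type*} [NormedAddCommGroup H] [InnerProductSpace ℝ H]

def HasSubgradientAt (φ : H → ℝ) (v p : H) : Prop := ∀ y, φ p + ⟪v, y - p⟫ ≤ φ y

theorem HasSubgradientAt.inner_sub_nonneg {φ : H → ℝ} {v w p q : H}
    (hp : HasSubgradientAt φ v p) (hq : HasSubgradientAt φ w q) : 0 ≤ ⟪v - w, p - q⟫ := by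
  have h₁ := hp q
  have h₂ := hq p
  rw [← neg_sub p q, inner_neg_right] at h₁
  rw [inner_sub_left]
  linarith

theorem lipschitzOnWith_of_hasSubgradientAt_norm_le {φ : H → ℝ} {S : Set H} {B : ℝ}
    (h : ∀ p ∈ S, ∃ v, HasSubgradientAt φ v p ∧ ‖v‖ ≤ B) :
    LipschitzOnWith (Real.toNNReal B) φ S := by
  refine LipschitzOnWith.of_le_add_mul' B fun p hp q _ => ?_
  obtain ⟨v, hv, hvB⟩ := h p hp
  calc φ p ≤ φ q - ⟪v, q - p⟫ := by linarith [hv q]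
    _ ≤ φ q + ‖v‖ * ‖q - p‖ := by
      linarith [neg_abs_le ⟪v, q - p⟫, abs_real_inner_le_norm v (q - p)]
    _ ≤ φ q + B * dist p q := by rw [dist_comm, dist_eq_norm]; gcongr

theorem LipschitzOnWith.comp_of_hasSubgradientAt {α : Type*} [PseudoMetricSpace α] {φ : H → ℝ}
    {z v : α → H} {s : Set α} {K : ℝ≥0} {B : ℝ} (hz : LipschitzOnWith K z s)
    (hv : ∀ t ∈ s, HasSubgradientAt φ (v t) (z t)) (hB : ∀ t ∈ s, ‖v t‖ ≤ B) :
    LipschitzOnWith (Real.toNNReal B * K) (fun t => φ (z t)) s := by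
  refine (lipschitzOnWith_of_hasSubgradientAt_norm_le ?_).comp hz (mapsTo_image z s)
  rintro _ ⟨t, ht, rfl⟩
  exact ⟨v t, hv t ht, hB t ht⟩

theorem norm_le_of_inner_add_nonpos {u w q : H} {c : ℝ} (hc : 0 ≤ c) (hq : ‖q‖ ≤ c * ‖w‖)
    (h : ⟪u + q, u + w⟫ ≤ 0) :
    ‖u‖ ≤ (1 + 2 * c) * ‖w‖ := by
  have hexp : ⟪u + q, u + w⟫ = ‖u‖ ^ 2 + ⟪u, w⟫ + ⟪q, u + w⟫ := by
    rw [inner_add_left, inner_add_right, real_inner_self_eq_norm_sq]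
  have huw := abs_real_inner_le_norm u w
  have hquw : |⟪q, u + w⟫| ≤ c * ‖w‖ * (‖u‖ + ‖w‖) :=
    (abs_real_inner_le_norm _ _).trans
      (mul_le_mul hq (norm_add_le _ _) (norm_nonneg _) (by positivity))
  have key : ‖u‖ ^ 2 ≤ (1 + c) * ‖u‖ * ‖w‖ + c * ‖w‖ ^ 2 := by
    linarith [neg_abs_le ⟪u, w⟫, neg_abs_le ⟪q, u + w⟫]
  by_contra! hlt
  have hw := norm_nonneg w
  nlinarith [mul_nonneg hc hw, mul_nonneg (mul_nonneg hc hw) hw, mul_nonneg hc (norm_nonneg u)]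

theorem inner_sub_le_mul_norm_sq_of_lipschitz {g' : H → H} {L c : ℝ} (hL : 0 ≤ L)
    (hg_lip : ∀ a b : H, ‖g' a - g' b‖ ≤ L * ‖a - b‖) {d dd y : H} (hdd : ‖dd‖ ≤ c * ‖d‖) :
    ⟪g' (d + y) - g' y, dd + d⟫ ≤ L * (c + 1) * ‖d‖ ^ 2 :=
  calc ⟪g' (d + y) - g' y, dd + d⟫ ≤ ‖g' (d + y) - g' y‖ * ‖dd + d‖ := real_inner_le_norm _ _
    _ ≤ (L * ‖d‖) * ((c + 1) * ‖d‖) := by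
        gcongr
        · simpa using hg_lip (d + y) y
        · linarith [norm_add_le dd d]
    _ = L * (c + 1) * ‖d‖ ^ 2 := by ring

end InnerProduct

section RelativeBound

variable {α E F : Type*} [SeminormedAddCommGroup E] [SeminormedAddCommGroup F]
  {u : α → E} {w : α → F} {s : Set α} {L : ℝ}

theorem ContinuousOn.of_norm_sub_le_mul [TopologicalSpace α] (hw : ContinuousOn w s)
    (h : ∀ t ∈ s, ∀ r ∈ s, ‖u t - u r‖ ≤ L * ‖w t - w r‖) : ContinuousOn u s := by
  intro t ht
  rw [ContinuousWithinAt, tendsto_iff_norm_sub_tendsto_zero]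
  refine squeeze_zero' (Eventually.of_forall fun _ => norm_nonneg _)
    (eventually_nhdsWithin_of_forall fun r hr => h r hr t ht) ?_
  simpa using ((hw t ht).tendsto.sub_const (w t)).norm.const_mul L

theorem LipschitzOnWith.of_norm_sub_le_mul [PseudoMetricSpace α] {K : ℝ≥0}
    (hw : LipschitzOnWith K w s) (hL : 0 ≤ L)
    (h : ∀ t ∈ s, ∀ r ∈ s, ‖u t - u r‖ ≤ L * ‖w t - w r‖) :
    LipschitzOnWith (L.toNNReal * K) u s :=
  LipschitzOnWith.of_dist_le_mul fun t ht r hr => by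
    rw [dist_eq_norm, NNReal.coe_mul, Real.coe_toNNReal L hL, mul_assoc]
    refine (h t ht r hr).trans (mul_le_mul_of_nonneg_left ?_ hL)
    simpa only [dist_eq_norm] using hw.dist_le_mul t ht r hr

end RelativeBound

section ForwardBackwardFlow

variable {H : Type*} [NormedAddCommGroup H] [InnerProductSpace ℝ H]
  {f g : H → ℝ} {g' : H → H} {β γ : ℝ} {x xd : ℝ → H}

theorem norm_sub_le_of_hasSubgradientAt_forwardBackward (hβ : 0 < β) (hγ : 0 < γ)
    (hg_lip : ∀ a b : H, ‖g' a - g' b‖ ≤ (1/β) * ‖a - b‖) {d₁ d₂ y₁ y₂ : H}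
    (h₁ : HasSubgradientAt f (-((1/γ) • d₁) - g' y₁) (d₁ + y₁))
    (h₂ : HasSubgradientAt f (-((1/γ) • d₂) - g' y₂) (d₂ + y₂)) :
    ‖d₁ - d₂‖ ≤ (1 + 2 * (γ/β)) * ‖y₁ - y₂‖ := by
  have hmono := h₁.inner_sub_nonneg h₂
  have hv : (-((1/γ) • d₁) - g' y₁) - (-((1/γ) • d₂) - g' y₂)
      = -(1/γ) • ((d₁ - d₂) + γ • (g' y₁ - g' y₂)) := by
    rw [smul_add, smul_smul, neg_mul, one_div_mul_cancel hγ.ne', neg_smul, neg_smul, one_smul,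
      smul_sub]
    abel
  have hz : (d₁ + y₁) - (d₂ + y₂) = (d₁ - d₂) + (y₁ - y₂) := by abel
  rw [hv, hz, real_inner_smul_left] at hmono
  refine norm_le_of_inner_add_nonpos (q := γ • (g' y₁ - g' y₂)) (by positivity) ?_ ?_
  · rw [norm_smul, Real.norm_of_nonneg hγ.le, div_eq_mul_one_div γ β, mul_assoc]
    exact mul_le_mul_of_nonneg_left (hg_lip y₁ y₂) hγ.le
  · have : 0 < 1/γ := by positivity
    nlinarith

theorem exists_lipschitzOnWith_Icc_of_forwardBackward (hβ : 0 < β) (hγ : 0 < γ)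
    (hg_lip : ∀ a b : H, ‖g' a - g' b‖ ≤ (1/β) * ‖a - b‖)
    (hx : ∀ t ≥ (0:ℝ), HasDerivAt x (xd t) t)
    (hprox : ∀ t ≥ (0:ℝ), HasSubgradientAt f (-((1/γ) • xd t) - g' (x t)) (xd t + x t))
    {a : ℝ} (ha : 0 ≤ a) (b : ℝ) :
    ∃ K K' : ℝ≥0, LipschitzOnWith K x (Icc a b) ∧ LipschitzOnWith K' xd (Icc a b) := by
  have hrel : ∀ t ∈ Ici (0:ℝ), ∀ s ∈ Ici (0:ℝ),
      ‖xd t - xd s‖ ≤ (1 + 2 * (γ/β)) * ‖x t - x s‖ := fun t ht s hs =>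
    norm_sub_le_of_hasSubgradientAt_forwardBackward hβ hγ hg_lip (hprox t ht) (hprox s hs)
  have hxc : ContinuousOn x (Ici 0) := fun t ht => (hx t ht).continuousAt.continuousWithinAt
  have hI : Icc a b ⊆ Ici 0 := fun t ht => ha.trans ht.1
  obtain ⟨C, hC⟩ := isCompact_Icc.exists_bound_of_continuousOn
    ((hxc.of_norm_sub_le_mul hrel).mono hI)
  have hxL : LipschitzOnWith C.toNNReal x (Icc a b) :=
    (convex_Icc a b).lipschitzOnWith_of_nnnorm_hasDerivWithin_le
      (fun t ht => (hx t (hI ht)).hasDerivWithinAt) fun t ht => by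
        rw [← NNReal.coe_le_coe, coe_nnnorm]
        exact (hC t ht).trans (Real.le_coe_toNNReal C)
  exact ⟨_, _, hxL,
    hxL.of_norm_sub_le_mul (by positivity) fun t ht s hs => hrel t (hI ht) s (hI hs)⟩

theorem absolutelyContinuousOnInterval_energy (hβ : 0 < β) (hγ : 0 < γ)
    (hg_cvx : ∀ a : H, HasSubgradientAt g (g' a) a)
    (hg_lip : ∀ a b : H, ‖g' a - g' b‖ ≤ (1/β) * ‖a - b‖)
    (hx : ∀ t ≥ (0:ℝ), HasDerivAt x (xd t) t)
    (hprox : ∀ t ≥ (0:ℝ), HasSubgradientAt f (-((1/γ) • xd t) - g' (x t)) (xd t + x t))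
    {a b : ℝ} (ha : 0 ≤ a) (hab : a ≤ b) :
    AbsolutelyContinuousOnInterval
      (fun t => f (xd t + x t) + g (xd t + x t) + (1/(2*γ)) * ‖xd t‖ ^ 2) a b := by
  obtain ⟨K, K', hxL, hxdL⟩ :=
    exists_lipschitzOnWith_Icc_of_forwardBackward hβ hγ hg_lip hx hprox ha b
  have hg'c : Continuous g' :=
    (LipschitzWith.of_dist_le' (K := 1/β) fun p q => by
      simpa only [dist_eq_norm] using hg_lip p q).continuous
  obtain ⟨Bf, hBf⟩ := isCompact_Icc.exists_bound_of_continuousOn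
    (f := fun t => -((1/γ) • xd t) - g' (x t))
    ((hxdL.continuousOn.const_smul _).neg.sub (hg'c.comp_continuousOn hxL.continuousOn))
  obtain ⟨Bg, hBg⟩ := isCompact_Icc.exists_bound_of_continuousOn
    (f := fun t => g' (xd t + x t))
    (hg'c.comp_continuousOn (hxdL.continuousOn.add hxL.continuousOn))
  have hfz := (hxdL.add hxL).comp_of_hasSubgradientAt (fun t ht => hprox t (ha.trans ht.1)) hBf
  have hgz := (hxdL.add hxL).comp_of_hasSubgradientAt (fun t _ => hg_cvx _) hBg
  have hn := lipschitzWith_one_norm.comp_lipschitzOnWith hxdL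
  rw [← uIcc_of_le hab] at hfz hgz hn
  have hsq := (hn.absolutelyContinuousOnInterval.mul hn.absolutelyContinuousOnInterval).const_mul
    (1/(2*γ))
  simp only [← sq] at hsq
  exact (hfz.absolutelyContinuousOnInterval.add hgz.absolutelyContinuousOnInterval).add hsq

theorem hasDerivAt_energy [CompleteSpace H] (hg_diff : ∀ z : H, HasGradientAt g (g' z) z)
    {xdd : ℝ → H} {t : ℝ} (hx : HasDerivAt x (xd t) t) (hxd : HasDerivAt xd (xdd t) t)
    (hf : HasDerivAt (fun s => f (xd s + x s)) ⟪-((1/γ) • xd t) - g' (x t), xdd t + xd t⟫ t) :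
    HasDerivAt (fun s => f (xd s + x s) + g (xd s + x s) + (1/(2*γ)) * ‖xd s‖ ^ 2)
      (⟪g' (xd t + x t) - g' (x t), xdd t + xd t⟫ - (1/γ) * ‖xd t‖ ^ 2) t := by
  have hg : HasDerivAt (fun s => g (xd s + x s)) ⟪g' (xd t + x t), xdd t + xd t⟫ t := by
    have h := (hg_diff (xd t + x t)).hasFDerivAt.comp_hasDerivAt t (hxd.add hx)
    rw [InnerProductSpace.toDual_apply_apply] at h
    exact h
  refine ((hf.add hg).add (hxd.norm_sq.const_mul (1/(2*γ)))).congr_deriv ?_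
  simp only [inner_sub_left, inner_neg_left, real_inner_smul_left, inner_add_right,
    real_inner_self_eq_norm_sq]
  ring

end ForwardBackwardFlow

theorem stmt13_general
    {H : Type*} [NormedAddCommGroup H] [InnerProductSpace ℝ H] [CompleteSpace H]
    (f : H → ℝ)
    (g : H → ℝ) (g' : H → H)
    (hg_diff : ∀ z : H, HasGradientAt g (g' z) z)
    (hg_cvx : ∀ a b : H, g a + ⟪g' a, b - a⟫ ≤ g b)
    (β : ℝ) (hβ : 0 < β)
    (hg_lip : ∀ a b : H, ‖g' a - g' b‖ ≤ (1/β) * ‖a - b‖)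
    (γ : ℝ) (hγ : 0 < γ)
    (x xd xdd : ℝ → H)
    (hx : ∀ t ≥ (0:ℝ), HasDerivAt x (xd t) t)
    (hprox : ∀ t ≥ (0:ℝ), ∀ y : H,
      f (xd t + x t) + ⟪-((1/γ) • xd t) - g' (x t), y - (xd t + x t)⟫ ≤ f y)
    (hxdd : ∀ᵐ t ∂(volume.restrict (Ici (0:ℝ))),
      HasDerivAt xd (xdd t) t ∧ ‖xdd t‖ ≤ (2 + γ/β) * ‖xd t‖)
    (hchain_f : ∀ᵐ t ∂(volume.restrict (Ici (0:ℝ))),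
      HasDerivAt (fun s => f (xd s + x s))
        ⟪-((1/γ) • xd t) - g' (x t), xdd t + xd t⟫ t) :
    (∀ᵐ t ∂(volume.restrict (Ici (0:ℝ))),
      ∀ D : ℝ,
        HasDerivAt (fun s => f (xd s + x s) + g (xd s + x s) +
          (1/(2*γ)) * ‖xd s‖ ^ 2) D t →
        D + (1/γ - (1/β) * (3 + γ/β)) * ‖xd t‖ ^ 2 ≤ 0) ∧
    ((γ/β) * (3 + γ/β) ≤ 1 →
      AntitoneOn (fun t => f (xd t + x t) + g (xd t + x t) +
        (1/(2*γ)) * ‖xd t‖ ^ 2) (Ici 0)) := by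
  have hdecay : ∀ᵐ t ∂(volume.restrict (Ici (0:ℝ))), ∃ D,
      HasDerivAt (fun s => f (xd s + x s) + g (xd s + x s) + (1/(2*γ)) * ‖xd s‖ ^ 2) D t ∧
        D + (1/γ - (1/β) * (3 + γ/β)) * ‖xd t‖ ^ 2 ≤ 0 := by
    filter_upwards [hxdd, hchain_f, ae_restrict_mem measurableSet_Ici]
      with t ⟨hxd, hxdd_le⟩ hf ht
    refine ⟨_, hasDerivAt_energy hg_diff (hx t ht) hxd hf, ?_⟩
    have := inner_sub_le_mul_norm_sq_of_lipschitz (by positivity) hg_lip (y := x t) hxdd_le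
    linarith
  refine ⟨hdecay.mono fun t ⟨D, hD, hle⟩ D' hD' => hD'.unique hD ▸ hle, fun hsmall => ?_⟩
  refine antitoneOn_of_ae_deriv_nonpos ordConnected_Ici (fun a ha _ _ hab =>
    absolutelyContinuousOnInterval_energy hβ hγ hg_cvx hg_lip hx hprox ha hab) ?_
  filter_upwards [hdecay] with t ⟨D, hD, hle⟩
  have hcoeff : (1/β) * (3 + γ/β) ≤ 1/γ :=
    calc (1/β) * (3 + γ/β) = (1/γ) * ((γ/β) * (3 + γ/β)) := by field_simp
      _ ≤ 1/γ := mul_le_of_le_one_right (by positivity) hsmall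
  rw [hD.deriv]
  nlinarith [sq_nonneg ‖xd t‖]

/-- Energy decrease along the continuous forward–backward flow: a.e.
`(d/dt)[(f+g)(ẋ(t)+x(t)) + (1/(2γ))‖ẋ(t)‖²] + [1/γ − (1/β)(3+γ/β)]‖ẋ(t)‖² ≤ 0`;
in particular, if `(γ/β)(3+γ/β) ≤ 1`, the energy
`t ↦ (f+g)(ẋ(t)+x(t)) + (1/(2γ))‖ẋ(t)‖²` is nonincreasing on `[0,∞)`. -/
theorem stmt13
    {H : Type*} [NormedAddCommGroup H] [InnerProductSpace ℝ H] [CompleteSpace H]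
    (f : H → ℝ) (hf_cvx : ConvexOn ℝ Set.univ f) (hf_lsc : LowerSemicontinuous f)
    (g : H → ℝ) (g' : H → H)
    (hg_diff : ∀ z : H, HasGradientAt g (g' z) z)
    (hg_cvx : ∀ a b : H, g a + ⟪g' a, b - a⟫ ≤ g b)
    (β : ℝ) (hβ : 0 < β)
    (hg_lip : ∀ a b : H, ‖g' a - g' b‖ ≤ (1/β) * ‖a - b‖)
    (γ : ℝ) (hγ : 0 < γ)
    (x xd xdd : ℝ → H)
    (hx : ∀ t ≥ (0:ℝ), HasDerivAt x (xd t) t)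
    (hprox : ∀ t ≥ (0:ℝ), ∀ y : H,
      f (xd t + x t) + ⟪-((1/γ) • xd t) - g' (x t), y - (xd t + x t)⟫ ≤ f y)
    (hxdd : ∀ᵐ t ∂(volume.restrict (Ici (0:ℝ))),
      HasDerivAt xd (xdd t) t ∧ ‖xdd t‖ ≤ (2 + γ/β) * ‖xd t‖)
    (hchain_f : ∀ᵐ t ∂(volume.restrict (Ici (0:ℝ))),
      HasDerivAt (fun s => f (xd s + x s))
        ⟪-((1/γ) • xd t) - g' (x t), xdd t + xd t⟫ t) :
    (∀ᵐ t ∂(volume.restrict (Ici (0:ℝ))),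
      ∀ D : ℝ,
        HasDerivAt (fun s => f (xd s + x s) + g (xd s + x s) +
          (1/(2*γ)) * ‖xd s‖ ^ 2) D t →
        D + (1/γ - (1/β) * (3 + γ/β)) * ‖xd t‖ ^ 2 ≤ 0) ∧
    ((γ/β) * (3 + γ/β) ≤ 1 →
      AntitoneOn (fun t => f (xd t + x t) + g (xd t + x t) +
        (1/(2*γ)) * ‖xd t‖ ^ 2) (Ici 0)) :=
  stmt13_general f g g' hg_diff hg_cvx β hβ hg_lip γ hγ x xd xdd hx hprox hxdd hchain_f
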